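/- For any unimodular lattice Λ ∈ X, any c > 0 and any T > r > 0, writing f_{r,c} = 𝟙_{E_{r,c}}, one has the sandwich inequality #(Λ ∩ (E_{T,c} ∖ E_{r,c})) ≤ (1/r)∫₀ᵀ f̂_{r,c}(g_t Λ) dt ≤ #(Λ ∩ E_{T+r,c}). Consequently (1/r)∫₀^{T−r} f̂_{r,c}(g_t Λ) dt ≤ #(E_{T,c}(Λ)) ≤ (1/r)∫₀ᵀ f̂_{r,c}(g_t Λ) dt + #(E_{r,c}(Λ)). -/

import Mathlib

/- Common setup: the Minkowski space `K_S` of a number field `K`, the homogeneous space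
`X = SL_d(K_S)/SL_d(𝒪)`, weighted quasi-norms, the sets `E_{T,c}`, Siegel transforms,
the diagonal flow `g_t`, the unipotents `u(ϑ)`, the function `α` and the class `C_α(X)`. -/

open MeasureTheory NumberField Matrix Filter Topology Set
open scoped ENNReal Classical

noncomputable section

namespace Paper

variable (K : Type) [Field K] [NumberField K]

/-- The Minkowski space `K_S ≅ ℝ^{r₁} × ℂ^{r₂}` of the number field `K`. -/
abbrev KS : Type :=
  ({w : InfinitePlace K // w.IsReal} → ℝ) × ({w : InfinitePlace K // w.IsComplex} → ℂ)

/-- The absolute value of the component of `z ∈ K_S` at the archimedean place `w`. -/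
def placeAbs (z : KS K) (w : InfinitePlace K) : ℝ :=
  if h : w.IsReal then |z.1 ⟨w, h⟩|
  else ‖z.2 ⟨w, NumberField.InfinitePlace.not_isReal_iff_isComplex.mp h⟩‖

variable {K}

/-- The weighted quasi-norm `‖x‖_a = max_{i,w} |x_{i,w}|^{1/a_{i,w}}` on `K_S^m`. -/
def wnorm {m : ℕ} (a : Fin m → InfinitePlace K → ℝ) (x : Fin m → KS K) : ℝ :=
  ⨆ i, ⨆ w, placeAbs K (x i) w ^ (1 / a i w)

/-- `a` is a weight vector: positive entries, and
`∑_{w real} ∑ᵢ a_{i,w} + 2 ∑_{w complex} ∑ᵢ a_{i,w} = 1`. -/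
def IsWeight {m : ℕ} (a : Fin m → InfinitePlace K → ℝ) : Prop :=
  (∀ i w, 0 < a i w) ∧
    ((∑ w : {w : InfinitePlace K // w.IsReal}, ∑ i, a i w.1) +
      2 * ∑ w : {w : InfinitePlace K // w.IsComplex}, ∑ i, a i w.1) = 1

/-- The standard Euclidean inner product on `K_S ≅ ℝ^k`. -/
def ksInner (z z' : KS K) : ℝ :=
  ∑ w, z.1 w * z'.1 w + ∑ w, (z.2 w * (starRingEnd ℂ) (z'.2 w)).re

/-- The standard Euclidean inner product on `K_S^ι ≅ ℝ^{|ι| k}`. -/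
def vinner {ι : Type} [Fintype ι] (v v' : ι → KS K) : ℝ := ∑ i, ksInner (v i) (v' i)

/-- The Euclidean norm on `K_S^ι ≅ ℝ^{|ι| k}`. -/
def enorm2 {ι : Type} [Fintype ι] (v : ι → KS K) : ℝ := Real.sqrt (vinner v v)

section mn
variable {m n : ℕ}

/-- The first `m` coordinates (the `x`-part) of a vector in `K_S^{m+n}`. -/
def xpart (z : (Fin m ⊕ Fin n) → KS K) : Fin m → KS K := fun i => z (Sum.inl i)

/-- The last `n` coordinates (the `y`-part) of a vector in `K_S^{m+n}`. -/
def ypart (z : (Fin m ⊕ Fin n) → KS K) : Fin n → KS K := fun j => z (Sum.inr j)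

/-- The set `E_{T,c} = {(x,y) ∈ K_S^m × K_S^n : ‖x‖_a ‖y‖_b < c, 1 ≤ ‖y‖_b < e^T}`. -/
def Eset (a : Fin m → InfinitePlace K → ℝ) (b : Fin n → InfinitePlace K → ℝ) (c T : ℝ) :
    Set ((Fin m ⊕ Fin n) → KS K) :=
  {z | wnorm a (xpart z) * wnorm b (ypart z) < c ∧
    1 ≤ wnorm b (ypart z) ∧ wnorm b (ypart z) < Real.exp T}

/-- The set `F_{r,c} = {(x,y) ∈ K_S^m × K_S^n : ‖x‖_a ‖y‖_b < c, 1 ≤ ‖x‖_a < e^r}`. -/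
def Fset (a : Fin m → InfinitePlace K → ℝ) (b : Fin n → InfinitePlace K → ℝ) (c r : ℝ) :
    Set ((Fin m ⊕ Fin n) → KS K) :=
  {z | wnorm a (xpart z) * wnorm b (ypart z) < c ∧
    1 ≤ wnorm a (xpart z) ∧ wnorm a (xpart z) < Real.exp r}

/-- The `a`-weighted flow `F_{at}` on `K_S^m`. -/
def flow (a : Fin m → InfinitePlace K → ℝ) (t : ℝ) (x : Fin m → KS K) : Fin m → KS K :=
  fun i => (fun w => Real.exp (a i w.1 * t) * (x i).1 w,
            fun w => (Real.exp (a i w.1 * t) : ℂ) * (x i).2 w)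

end mn

/-- The unit sphere `𝕊 = {x ∈ K_S^ι : ∑_{i,v} |x_{i,v}|² = 1}`. -/
def usphere {ι : Type} [Fintype ι] : Set (ι → KS K) := {x | vinner x x = 1}

/-- `π_a(x) ∈ A`: some (equivalently, the unique) point of the `F_{at}`-orbit of `x`
on the unit sphere lies in `A`. -/
def projIn {m : ℕ} (a : Fin m → InfinitePlace K → ℝ) (A : Set (Fin m → KS K))
    (x : Fin m → KS K) : Prop :=
  ∃ t : ℝ, flow a t x ∈ usphere ∧ flow a t x ∈ A

/-- The set `E_{T,c}(A,B)`. -/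
def EsetAB {m n : ℕ} (a : Fin m → InfinitePlace K → ℝ) (b : Fin n → InfinitePlace K → ℝ)
    (c T : ℝ) (A : Set (Fin m → KS K)) (B : Set (Fin n → KS K)) :
    Set ((Fin m ⊕ Fin n) → KS K) :=
  {z | z ∈ Eset a b c T ∧ projIn a A (xpart z) ∧ projIn b B (ypart z)}

/-- The cone (minus the origin) on a subset `A` of the unit sphere. -/
def cone {ι : Type} [Fintype ι] (A : Set (ι → KS K)) : Set (ι → KS K) :=
  {x | ∃ r : ℝ, 0 < r ∧ r ≤ 1 ∧ ∃ y ∈ A, x = r • y}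

/-- The standard probability measure of a subset `A` of the unit sphere, defined as the
normalized Lebesgue measure of the cone on `A`. -/
def sphVol {ι : Type} [Fintype ι] (A : Set (ι → KS K)) : ℝ≥0∞ :=
  volume (cone A) / volume (cone (usphere (K := K) (ι := ι)))

/-- The topological frontier of a subset `A` of the unit sphere, relative to the sphere. -/
def relFrontier {ι : Type} [Fintype ι] (A : Set (ι → KS K)) : Set (ι → KS K) :=
  closure A ∩ closure ((usphere (K := K) (ι := ι)) \ A)

variable (K)

/-- The Haar measure `λ` on `K_S`: the multiple `ϖ` of Lebesgue measure in each of the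
`k` real coordinates of `K_S ≅ ℝ^k`. -/
def lam (ϖ : ℝ) : Measure (KS K) :=
  (ENNReal.ofReal ϖ) ^ (Module.finrank ℚ K) • (volume : Measure (KS K))

/-- The Haar measure `λ` on `K_S^ι`: the product of copies of `lam K ϖ`. -/
def lamd (ι : Type) [Fintype ι] (ϖ : ℝ) : Measure (ι → KS K) :=
  (ENNReal.ofReal ϖ) ^ (Module.finrank ℚ K * Fintype.card ι) • (volume : Measure (ι → KS K))

/-- The embedding `ι_S : 𝒪 → K_S` of the ring of integers into the Minkowski space. -/
def intHom : 𝓞 K →+* KS K := (mixedEmbedding K).comp (algebraMap (𝓞 K) K)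

/-- The image `ι_S(𝒪)` of `𝒪` in `K_S`, as an additive subgroup. -/
def intLattice : AddSubgroup (KS K) := (intHom K).toAddMonoidHom.range

/-- `𝒪` has covolume one in `K_S` with respect to the measure `lam K ϖ`. -/
def covolOne (ϖ : ℝ) : Prop :=
  ∃ F : Set (KS K), IsAddFundamentalDomain (intLattice K) F (lam K ϖ) ∧ lam K ϖ F = 1

/-- `G = SL_d(K_S)`, with rows/columns indexed by `ι`. -/
abbrev SLd (ι : Type) [Fintype ι] [DecidableEq ι] : Type :=
  Matrix.SpecialLinearGroup ι (KS K)

variable (ι : Type) [Fintype ι] [DecidableEq ι]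

instance : TopologicalSpace (SLd K ι) :=
  TopologicalSpace.induced (fun g => (g : Matrix ι ι (KS K))) inferInstance

instance : MeasurableSpace (Matrix ι ι (KS K)) :=
  MeasurableSpace.pi (m := fun _ : ι => inferInstance)

instance : MeasurableSpace (SLd K ι) :=
  MeasurableSpace.comap (fun g => (g : Matrix ι ι (KS K))) inferInstance

/-- `Γ = SL_d(ι_S(𝒪))`, the image of `SL_d(𝒪)` in `G`. -/
def Gamma : Subgroup (SLd K ι) :=
  (Matrix.SpecialLinearGroup.map (n := ι) (intHom K)).range

/-- The homogeneous space `X = G/Γ`. -/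
abbrev XS : Type := SLd K ι ⧸ Gamma K ι

/-- The standard lattice `ι_S(𝒪)^d ⊆ K_S^d`. -/
def stdLat : Set (ι → KS K) := {v | ∃ w : ι → 𝓞 K, v = fun i => intHom K (w i)}

/-- The unimodular lattice in `K_S^d` corresponding to a point of `X = G/Γ`:
the orbit `g · ι_S(𝒪)^d` of the standard lattice under any representative `g` of `x`. -/
def latticeOf (x : XS K ι) : Set (ι → KS K) :=
  {v | ∃ g : SLd K ι, QuotientGroup.mk g = x ∧
    ∃ w ∈ stdLat K ι, v = Matrix.mulVec (g : Matrix ι ι (KS K)) w}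

/-- The Siegel transform `f̂(Λ) = ∑_{v ∈ Λ ∖ {0}} f(v)`. -/
def siegel (f : (ι → KS K) → ℝ) (x : XS K ι) : ℝ :=
  ∑' v : ↥(latticeOf K ι x \ {0}), f ↑v

/-- The open Euclidean ball of radius `r` about the origin in `K_S^ι ≅ ℝ^{|ι| k}`. -/
def Bset (r : ℝ) : Set (ι → KS K) := {v | enorm2 v < r}

/-- The open annulus `{v ∈ K_S^ι : s < ‖v‖₂ < r}`. -/
def annulus (s r : ℝ) : Set (ι → KS K) := {v | s < enorm2 v ∧ enorm2 v < r}

variable {K ι}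

/-- The function `α(Λ) = sup { d(Λ')⁻¹ : Λ' a subgroup of Λ }`: the supremum is over the
subgroups generated by linearly independent tuples of lattice vectors, whose covolume
`d(Λ')` in their real span is the square root of the Gram determinant. -/
def alpha (x : XS K ι) : ℝ :=
  ⨆ (j : ℕ) (v : Fin j → (ι → KS K)) (_ : ∀ i, v i ∈ latticeOf K ι x)
    (_ : LinearIndependent ℝ v),
    (Real.sqrt (Matrix.det (Matrix.of fun i i' => vinner (v i) (v i'))))⁻¹

/-- The class `C_α(X)`: functions continuous off a `μ`-null set whose growth is
majorized by `α`. -/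
def Calpha (μ : Measure (XS K ι)) : Set ((XS K ι) → ℝ) :=
  {φ | (∃ N : Set (XS K ι), μ N = 0 ∧ ∀ x ∉ N, ContinuousAt φ x) ∧
    ∃ C : ℝ, 0 < C ∧ ∀ x, |φ x| ≤ C * alpha x}

/-- Birkhoff genericity of `x ∈ X` for the flow `g` with respect to `φ`:
`(1/T) ∫₀ᵀ φ(g_t x) dt → ∫_X φ dμ` as `T → ∞`. -/
def IsGeneric (μ : Measure (XS K ι)) (g : ℝ → SLd K ι) (φ : XS K ι → ℝ) (x : XS K ι) : Prop :=
  Tendsto (fun T : ℝ => (1 / T) * ∫ t in (0:ℝ)..T, φ (g t • x)) atTop (𝓝 (∫ y, φ y ∂μ))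

variable {m n : ℕ}

/-- The diagonal one-parameter subgroup `g_t`, as a matrix. -/
def gtMat (a : Fin m → InfinitePlace K → ℝ) (b : Fin n → InfinitePlace K → ℝ) (t : ℝ) :
    Matrix (Fin m ⊕ Fin n) (Fin m ⊕ Fin n) (KS K) :=
  Matrix.diagonal (Sum.elim
    (fun i => ((fun w => Real.exp (a i w.1 * t)), (fun w => (Real.exp (a i w.1 * t) : ℂ))))
    (fun j => ((fun w => Real.exp (-(b j w.1) * t)), (fun w => (Real.exp (-(b j w.1) * t) : ℂ)))))

/-- `g_t` as an element of `SL_d(K_S)`, given that its determinant is one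
(which is the assertion `g_t ∈ G` of the paper). -/
def gtSL (a : Fin m → InfinitePlace K → ℝ) (b : Fin n → InfinitePlace K → ℝ)
    (hdet : ∀ t : ℝ, (gtMat a b t).det = 1) (t : ℝ) : SLd K (Fin m ⊕ Fin n) :=
  ⟨gtMat a b t, hdet t⟩

/-- `u(ϑ) = [[1_m, ϑ], [0, 1_n]]`, as an element of `SL_d(K_S)`. -/
def uSL (ϑ : Fin m → Fin n → KS K) : SLd K (Fin m ⊕ Fin n) :=
  ⟨Matrix.fromBlocks 1 (Matrix.of ϑ) 0 1, by
    rw [Matrix.det_fromBlocks_zero₂₁]; simp⟩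

variable (K m n)

/-- The underlying matrix of an element of `SL_{m+n}(K_S)`. -/
abbrev mat (g : SLd K (Fin m ⊕ Fin n)) : Matrix (Fin m ⊕ Fin n) (Fin m ⊕ Fin n) (KS K) := g

/-- The set `ℳ` of elements of `G` whose upper-left `m × m` block is invertible. -/
def Mset : Set (SLd K (Fin m ⊕ Fin n)) :=
  {g | IsUnit ((mat K m n g).toBlocks₁₁).det}

/-- The subgroup `ℋ` of block lower-triangular elements of `G`. -/
def Hsub : Subgroup (SLd K (Fin m ⊕ Fin n)) where
  carrier := {g | (mat K m n g).toBlocks₁₂ = 0}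
  one_mem' := by
    show (mat K m n 1).toBlocks₁₂ = 0
    rw [show mat K m n 1 = (1 : Matrix (Fin m ⊕ Fin n) (Fin m ⊕ Fin n) (KS K)) from rfl,
      ← Matrix.fromBlocks_one, Matrix.toBlocks_fromBlocks₁₂]
  mul_mem' := by
    intro a b ha hb
    have ha' : (mat K m n a).toBlocks₁₂ = 0 := ha
    have hb' : (mat K m n b).toBlocks₁₂ = 0 := hb
    have ha2 : Matrix.fromBlocks (mat K m n a).toBlocks₁₁ 0
        (mat K m n a).toBlocks₂₁ (mat K m n a).toBlocks₂₂ = mat K m n a := by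
      rw [← ha']; exact Matrix.fromBlocks_toBlocks _
    have hb2 : Matrix.fromBlocks (mat K m n b).toBlocks₁₁ 0
        (mat K m n b).toBlocks₂₁ (mat K m n b).toBlocks₂₂ = mat K m n b := by
      rw [← hb']; exact Matrix.fromBlocks_toBlocks _
    show (mat K m n (a * b)).toBlocks₁₂ = 0
    have : mat K m n (a * b) = mat K m n a * mat K m n b := rfl
    rw [this, ← ha2, ← hb2, Matrix.fromBlocks_multiply]
    simp
  inv_mem' := by
    intro g hg
    have hg' : (mat K m n g).toBlocks₁₂ = 0 := hg
    have hg2 : Matrix.fromBlocks (mat K m n g).toBlocks₁₁ 0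
        (mat K m n g).toBlocks₂₁ (mat K m n g).toBlocks₂₂ = mat K m n g := by
      rw [← hg']; exact Matrix.fromBlocks_toBlocks _
    set A := (mat K m n g).toBlocks₁₁ with hA
    have hdet : IsUnit A.det := by
      have h1 : (mat K m n g).det = 1 := g.prop
      rw [← hg2, Matrix.det_fromBlocks_zero₁₂] at h1
      exact ⟨⟨_, _, h1, by rw [mul_comm]; exact h1⟩, rfl⟩
    have hmul : mat K m n g * mat K m n g⁻¹ = 1 := by
      have : mat K m n (g * g⁻¹) = mat K m n g * mat K m n g⁻¹ := rfl
      rw [← this, mul_inv_cancel]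
      rfl
    have hBlock : A * (mat K m n g⁻¹).toBlocks₁₂ = 0 := by
      have h2 := congrArg Matrix.toBlocks₁₂ hmul
      rw [← hg2, ← Matrix.fromBlocks_toBlocks (mat K m n g⁻¹),
        Matrix.fromBlocks_multiply] at h2
      rw [← Matrix.fromBlocks_one, Matrix.toBlocks_fromBlocks₁₂] at h2
      have h3 : (1 : Matrix (Fin m ⊕ Fin n) (Fin m ⊕ Fin n) (KS K)).toBlocks₁₂ = 0 := by
        exact Matrix.ext fun i j => by
          simp only [Matrix.toBlocks₁₂, Matrix.of_apply, Matrix.zero_apply]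
          exact Matrix.one_apply_ne (by simp)
      simpa [h3] using h2
    show (mat K m n g⁻¹).toBlocks₁₂ = 0
    calc (mat K m n g⁻¹).toBlocks₁₂
        = A⁻¹ * (A * (mat K m n g⁻¹).toBlocks₁₂) := by
          rw [Matrix.nonsing_inv_mul_cancel_left _ _ hdet]
      _ = 0 := by rw [hBlock, Matrix.mul_zero]

end Paper

/-!
For a vector `v = (x, y)` the flow `g_t` fixes `‖x‖_a ‖y‖_b` and divides `‖y‖_b` by `e^t`, so
`g_t v ∈ E_{r,c}` exactly when `‖x‖_a ‖y‖_b < c` and `t` lies in the window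
`(log ‖y‖_b - r, log ‖y‖_b]` of length `r`. Since `Λ` is discrete and the sets `E_{T,c}` are
bounded, `f̂_{r,c}(g_t Λ)` is, for `0 ≤ t ≤ T`, the number of lattice points of `E_{T+r,c}` whose
window contains `t`. Integrating, `∫₀ᵀ f̂_{r,c}(g_t Λ) dt` is the sum over `Λ ∩ E_{T+r,c}` of the
lengths of the windows inside `[0, T]`; each is at most `r`, and equals `r` for
`v ∈ E_{T,c} ∖ E_{r,c}`, whose window lies in `[0, T]`. The consequences follow by replacing `T`
with `T - r` and splitting `E_{T,c}` along `E_{r,c}`.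
-/

namespace Paper

section HitTimes

lemma exp_le_and_lt_exp_add_iff {N : ℝ} (hN : 0 < N) (t r : ℝ) :
    (Real.exp t ≤ N ∧ N < Real.exp (t + r)) ↔ t ∈ Set.Ioc (Real.log N - r) (Real.log N) := by
  rw [Set.mem_Ioc, Real.le_log_iff_exp_le hN, sub_lt_iff_lt_add, ← Real.log_lt_iff_lt_exp hN,
    and_comm]

lemma intervalIntegral_indicator_one {T : ℝ} (hT : 0 ≤ T) {s : Set ℝ} (hs : MeasurableSet s) :
    ∫ t in (0:ℝ)..T, s.indicator (fun _ => (1:ℝ)) t = volume.real (s ∩ Set.Ioc 0 T) := by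
  rw [intervalIntegral.integral_of_le hT, integral_indicator_const (1:ℝ) hs,
    measureReal_restrict_apply hs, smul_eq_mul, mul_one]

lemma intervalIntegral_indicator_Ioc_nonneg {T : ℝ} (hT : 0 ≤ T) (l L : ℝ) :
    0 ≤ ∫ t in (0:ℝ)..T, (Set.Ioc l L).indicator (fun _ => (1:ℝ)) t := by
  rw [intervalIntegral_indicator_one hT measurableSet_Ioc]
  exact measureReal_nonneg

lemma intervalIntegral_indicator_Ioc_le {T : ℝ} (hT : 0 ≤ T) {r : ℝ} (hr : 0 ≤ r) (L : ℝ) :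
    ∫ t in (0:ℝ)..T, (Set.Ioc (L - r) L).indicator (fun _ => (1:ℝ)) t ≤ r := by
  rw [intervalIntegral_indicator_one hT measurableSet_Ioc]
  calc volume.real (Set.Ioc (L - r) L ∩ Set.Ioc 0 T) ≤ volume.real (Set.Ioc (L - r) L) :=
        measureReal_mono Set.inter_subset_left measure_Ioc_lt_top.ne
    _ = r := by rw [Real.volume_real_Ioc_of_le (by linarith), sub_sub_cancel]

lemma intervalIntegral_indicator_Ioc_eq {T r L : ℝ} (hr : 0 ≤ r) (hrL : r ≤ L) (hLT : L ≤ T) :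
    ∫ t in (0:ℝ)..T, (Set.Ioc (L - r) L).indicator (fun _ => (1:ℝ)) t = r := by
  rw [intervalIntegral_indicator_one (by linarith) measurableSet_Ioc,
    Set.inter_eq_left.mpr (Set.Ioc_subset_Ioc (by linarith) hLT),
    Real.volume_real_Ioc_of_le (by linarith), sub_sub_cancel]

end HitTimes

section WeightedNorm

variable {K : Type} [Field K] {m : ℕ}

lemma placeAbs_nonneg (z : KS K) (w : InfinitePlace K) : 0 ≤ placeAbs K z w := by
  unfold placeAbs
  split_ifs
  exacts [abs_nonneg _, norm_nonneg _]

lemma placeAbs_zero (w : InfinitePlace K) : placeAbs K 0 w = 0 := by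
  unfold placeAbs
  split_ifs <;> simp

lemma placeAbs_flow (a : Fin m → InfinitePlace K → ℝ) (t : ℝ) (x : Fin m → KS K) (i : Fin m)
    (w : InfinitePlace K) :
    placeAbs K (flow a t x i) w = Real.exp (a i w * t) * placeAbs K (x i) w := by
  unfold placeAbs flow
  split_ifs
  · rw [abs_mul, abs_of_pos (Real.exp_pos _)]
  · rw [norm_mul, Complex.norm_real, Real.norm_of_nonneg (Real.exp_pos _).le]

lemma wnorm_nonneg (a : Fin m → InfinitePlace K → ℝ) (x : Fin m → KS K) : 0 ≤ wnorm a x :=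
  Real.iSup_nonneg fun _ => Real.iSup_nonneg fun _ => Real.rpow_nonneg (placeAbs_nonneg _ _) _

lemma wnorm_zero {a : Fin m → InfinitePlace K → ℝ} (ha : ∀ i w, 0 < a i w) :
    wnorm a (0 : Fin m → KS K) = 0 := by
  simp only [wnorm, Pi.zero_apply, placeAbs_zero,
    Real.zero_rpow (one_div_ne_zero (ha _ _).ne'), Real.iSup_const_zero]

lemma wnorm_flow {a : Fin m → InfinitePlace K → ℝ} (ha : ∀ i w, 0 < a i w) (t : ℝ)
    (x : Fin m → KS K) : wnorm a (flow a t x) = Real.exp t * wnorm a x := by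
  simp only [wnorm, Real.mul_iSup_of_nonneg (Real.exp_nonneg t)]
  refine iSup_congr fun i => iSup_congr fun w => ?_
  rw [placeAbs_flow, Real.mul_rpow (Real.exp_nonneg _) (placeAbs_nonneg _ _), ← Real.exp_mul,
    mul_right_comm, mul_one_div_cancel (ha i w).ne', one_mul]

variable [NumberField K]

lemma norm_le_of_forall_placeAbs_le {z : KS K} {R : ℝ} (hR : 0 ≤ R)
    (h : ∀ w, placeAbs K z w ≤ R) : ‖z‖ ≤ R := by
  refine max_le ((pi_norm_le_iff_of_nonneg hR).2 fun w => ?_)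
    ((pi_norm_le_iff_of_nonneg hR).2 fun w => ?_)
  · simpa [placeAbs, w.2] using h w
  · simpa [placeAbs, InfinitePlace.not_isReal_iff_isComplex.mpr w.2] using h w

lemma rpow_placeAbs_le_wnorm (a : Fin m → InfinitePlace K → ℝ) (x : Fin m → KS K) (i : Fin m)
    (w : InfinitePlace K) : placeAbs K (x i) w ^ (1 / a i w) ≤ wnorm a x :=
  (le_ciSup (Set.finite_range _).bddAbove w).trans
    (le_ciSup (f := fun i => ⨆ w, placeAbs K (x i) w ^ (1 / a i w))
      (Set.finite_range _).bddAbove i)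

lemma IsWeight.le_one {a : Fin m → InfinitePlace K → ℝ} (ha : IsWeight a) (i : Fin m)
    (w : InfinitePlace K) : a i w ≤ 1 := by
  obtain ⟨hpos, hsum⟩ := ha
  have hcol : a i w ≤ ∑ i', a i' w :=
    Finset.single_le_sum (fun i' _ => (hpos i' w).le) (Finset.mem_univ i)
  have hsum_le : ∀ (P : InfinitePlace K → Prop) [Fintype {w // P w}] (hw : P w),
      ∑ i', a i' w ≤ ∑ w' : {w // P w}, ∑ i', a i' w'.1 := fun P _ hw =>
    Finset.single_le_sum (f := fun w' : {w // P w} => ∑ i', a i' w'.1)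
      (fun w' _ => Finset.sum_nonneg fun i' _ => (hpos i' w'.1).le)
      (Finset.mem_univ ⟨w, hw⟩)
  have hreal : 0 ≤ ∑ w' : {w : InfinitePlace K // w.IsReal}, ∑ i', a i' w'.1 :=
    Finset.sum_nonneg fun _ _ => Finset.sum_nonneg fun _ _ => (hpos _ _).le
  have hcomplex : 0 ≤ ∑ w' : {w : InfinitePlace K // w.IsComplex}, ∑ i', a i' w'.1 :=
    Finset.sum_nonneg fun _ _ => Finset.sum_nonneg fun _ _ => (hpos _ _).le
  by_cases h : w.IsReal
  · linarith [hsum_le _ h]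
  · linarith [hsum_le _ (InfinitePlace.not_isReal_iff_isComplex.mp h)]

lemma norm_le_of_wnorm_le {a : Fin m → InfinitePlace K → ℝ} (ha : IsWeight a)
    {x : Fin m → KS K} {C : ℝ} (hC : 1 ≤ C) (h : wnorm a x ≤ C) : ‖x‖ ≤ C := by
  refine (pi_norm_le_iff_of_nonneg (by linarith)).2 fun i =>
    norm_le_of_forall_placeAbs_le (by linarith) fun w => ?_
  have hpos := ha.1 i w
  have h0 := placeAbs_nonneg (x i) w
  calc placeAbs K (x i) w = (placeAbs K (x i) w ^ (1 / a i w)) ^ a i w := by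
        rw [← Real.rpow_mul h0, one_div_mul_cancel hpos.ne', Real.rpow_one]
    _ ≤ C ^ a i w :=
        Real.rpow_le_rpow (Real.rpow_nonneg h0 _) ((rpow_placeAbs_le_wnorm a x i w).trans h)
          hpos.le
    _ ≤ C := Real.rpow_le_self_of_one_le hC (ha.le_one i w)

end WeightedNorm

section DiagonalFlow

variable {K : Type} [Field K] {m n : ℕ}
  {a : Fin m → InfinitePlace K → ℝ} {b : Fin n → InfinitePlace K → ℝ}

lemma xpart_gtMat_mulVec (t : ℝ) (z : Fin m ⊕ Fin n → KS K) :
    xpart (gtMat a b t *ᵥ z) = flow a t (xpart z) := by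
  ext i <;> simp [xpart, flow, gtMat, Matrix.mulVec_diagonal]

lemma ypart_gtMat_mulVec (t : ℝ) (z : Fin m ⊕ Fin n → KS K) :
    ypart (gtMat a b t *ᵥ z) = flow b (-t) (ypart z) := by
  ext j <;> simp [ypart, flow, gtMat, Matrix.mulVec_diagonal]

lemma gtMat_mulVec_mem_Eset_iff (ha : ∀ i w, 0 < a i w) (hb : ∀ j w, 0 < b j w)
    (t c r : ℝ) (z : Fin m ⊕ Fin n → KS K) :
    gtMat a b t *ᵥ z ∈ Eset a b c r ↔ wnorm a (xpart z) * wnorm b (ypart z) < c ∧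
      Real.exp t ≤ wnorm b (ypart z) ∧ wnorm b (ypart z) < Real.exp (t + r) := by
  have hexp : Real.exp t * Real.exp (-t) = 1 := by
    rw [← Real.exp_add, add_neg_cancel, Real.exp_zero]
  simp only [Eset, Set.mem_ofPred_eq, xpart_gtMat_mulVec, ypart_gtMat_mulVec, wnorm_flow ha,
    wnorm_flow hb]
  rw [mul_mul_mul_comm, hexp, one_mul, Real.exp_neg, ← div_eq_inv_mul,
    le_div_iff₀ (Real.exp_pos t), div_lt_iff₀ (Real.exp_pos t), one_mul, ← Real.exp_add,
    add_comm r]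

lemma gtMat_mulVec_mem_Eset_iff_of_mem_Icc (ha : ∀ i w, 0 < a i w) (hb : ∀ j w, 0 < b j w)
    {c r t T : ℝ} (ht : t ∈ Set.Icc 0 T) (z : Fin m ⊕ Fin n → KS K) :
    gtMat a b t *ᵥ z ∈ Eset a b c r ↔ z ∈ Eset a b c (T + r) ∧
      t ∈ Set.Ioc (Real.log (wnorm b (ypart z)) - r) (Real.log (wnorm b (ypart z))) := by
  rw [gtMat_mulVec_mem_Eset_iff ha hb]
  constructor
  · rintro ⟨hxy, hty, hyt⟩
    have hy1 : 1 ≤ wnorm b (ypart z) := (Real.one_le_exp ht.1).trans hty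
    refine ⟨⟨hxy, hy1, hyt.trans_le (Real.exp_le_exp.mpr (by linarith [ht.2]))⟩, ?_⟩
    exact (exp_le_and_lt_exp_add_iff (by linarith) t r).mp ⟨hty, hyt⟩
  · rintro ⟨⟨hxy, hy1, -⟩, hwin⟩
    exact ⟨hxy, (exp_le_and_lt_exp_add_iff (by linarith) t r).mpr hwin⟩

lemma Eset_mono (c : ℝ) {T T' : ℝ} (hT : T ≤ T') : Eset a b c T ⊆ Eset a b c T' :=
  fun _ ⟨hxy, hy1, hyT⟩ => ⟨hxy, hy1, hyT.trans_le (Real.exp_le_exp.mpr hT)⟩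

lemma zero_notMem_Eset (hb : ∀ j w, 0 < b j w) (c T : ℝ) :
    (0 : Fin m ⊕ Fin n → KS K) ∉ Eset a b c T := by
  rintro ⟨-, hy, -⟩
  rw [show ypart (0 : Fin m ⊕ Fin n → KS K) = 0 from rfl, wnorm_zero hb] at hy
  exact absurd hy (by norm_num)

variable [NumberField K]

lemma isBounded_Eset (ha : IsWeight a) (hb : IsWeight b) (c T : ℝ) :
    Bornology.IsBounded (Eset a b c T) := by
  refine (Metric.isBounded_closedBall (x := 0) (r := max c (Real.exp T) + 1)).subset ?_
  rintro z ⟨hxy, hy1, hyT⟩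
  have hx : wnorm a (xpart z) ≤ c := by nlinarith [wnorm_nonneg a (xpart z)]
  have hC : 1 ≤ max c (Real.exp T) + 1 := by linarith [le_max_right c (Real.exp T), Real.exp_pos T]
  rw [mem_closedBall_zero_iff]
  refine (pi_norm_le_iff_of_nonneg (by linarith)).2 fun s => ?_
  rcases s with i | j
  · exact (norm_le_pi_norm (xpart z) i).trans (norm_le_of_wnorm_le ha hC (by
      linarith [le_max_left c (Real.exp T)]))
  · exact (norm_le_pi_norm (ypart z) j).trans (norm_le_of_wnorm_le hb hC (by
      linarith [le_max_right c (Real.exp T)]))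

end DiagonalFlow

section Lattices

open Pointwise

variable {K : Type} [Field K] {ι : Type} [Fintype ι]

lemma range_intHom_inter_finite [NumberField K] {s : Set (KS K)} (hs : Bornology.IsBounded s) :
    (Set.range (intHom K) ∩ s).Finite := by
  have h := ZSpan.setFinite_inter (mixedEmbedding.latticeBasis K) hs
  rw [mixedEmbedding.span_latticeBasis] at h
  refine h.subset ?_
  rintro _ ⟨⟨o, rfl⟩, hs⟩
  exact ⟨hs, o, rfl⟩

lemma stdLat_inter_finite [NumberField K] {M : Set (ι → KS K)} (hM : Bornology.IsBounded M) :
    (stdLat K ι ∩ M).Finite := by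
  obtain ⟨R, hR⟩ := hM.subset_closedBall 0
  refine (Set.Finite.pi (t := fun _ => Set.range (intHom K) ∩ Metric.closedBall 0 R)
    fun _ => range_intHom_inter_finite Metric.isBounded_closedBall).subset ?_
  rintro _ ⟨⟨w, rfl⟩, hv⟩ i -
  refine ⟨⟨w i, rfl⟩, ?_⟩
  have := hR hv
  rw [mem_closedBall_zero_iff] at this ⊢
  exact (norm_le_pi_norm _ i).trans this

variable [DecidableEq ι]

lemma smul_stdLat_subset_of_mem_Gamma {γ : SLd K ι} (hγ : γ ∈ Gamma K ι) :
    γ • stdLat K ι ⊆ stdLat K ι := by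
  obtain ⟨γ₀, rfl⟩ := hγ
  rintro _ ⟨_, ⟨w, rfl⟩, rfl⟩
  refine ⟨(γ₀ : Matrix ι ι (𝓞 K)) *ᵥ w, funext fun i => ?_⟩
  rw [RingHom.map_mulVec]
  rfl

lemma latticeOf_smul (g : SLd K ι) (x : XS K ι) :
    latticeOf K ι (g • x) = g • latticeOf K ι x := by
  ext v
  rw [Set.mem_smul_set_iff_inv_smul_mem]
  constructor
  · rintro ⟨h, hmk, w, hw, rfl⟩
    refine ⟨g⁻¹ * h, ?_, w, hw, (mul_smul g⁻¹ h w).symm⟩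
    change g⁻¹ • (h : XS K ι) = x
    rw [hmk, inv_smul_smul]
  · rintro ⟨h, hmk, w, hw, hv⟩
    refine ⟨g * h, by rw [← hmk]; rfl, w, hw, ?_⟩
    change g⁻¹ • v = h • w at hv
    change v = (g * h) • w
    rw [mul_smul, ← hv, smul_inv_smul]

lemma latticeOf_mk_one : latticeOf K ι (QuotientGroup.mk 1) = stdLat K ι := by
  refine subset_antisymm ?_ fun w hw => ⟨1, rfl, w, hw, (Matrix.one_mulVec w).symm⟩
  rintro _ ⟨h, hmk, w, hw, rfl⟩
  have hγ : h ∈ Gamma K ι := by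
    simpa using (QuotientGroup.eq (s := Gamma K ι)).mp hmk
  exact smul_stdLat_subset_of_mem_Gamma hγ ⟨w, hw, rfl⟩

lemma latticeOf_mk (g : SLd K ι) : latticeOf K ι (QuotientGroup.mk g) = g • stdLat K ι := by
  have hg : (QuotientGroup.mk g : XS K ι) = g • QuotientGroup.mk 1 :=
    congrArg QuotientGroup.mk (mul_one g).symm
  rw [hg, latticeOf_smul, latticeOf_mk_one]

lemma latticeOf_inter_finite [NumberField K] (x : XS K ι) {M : Set (ι → KS K)}
    (hM : Bornology.IsBounded M) :
    (latticeOf K ι x ∩ M).Finite := by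
  obtain ⟨g, rfl⟩ := QuotientGroup.mk_surjective x
  obtain ⟨R, hR⟩ := hM.subset_closedBall 0
  have hbdd : Bornology.IsBounded (g⁻¹ • M) := by
    rw [← Set.image_smul]
    exact ((isCompact_closedBall 0 R).image (continuous_const.matrix_mulVec continuous_id)
      ).isBounded.subset (Set.image_mono hR)
  rw [latticeOf_mk, ← smul_inv_smul g M, ← Set.smul_set_inter]
  exact (stdLat_inter_finite hbdd).smul_set

-- No finiteness is needed: for an infinite intersection both sides are the junk value `0`
-- of `tsum` and of `ncard`.
lemma siegel_indicator_one {A : Set (ι → KS K)} (hA : (0 : ι → KS K) ∉ A) (x : XS K ι) :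
    siegel K ι (A.indicator fun _ => 1) x = (latticeOf K ι x ∩ A).ncard := by
  have hset : (latticeOf K ι x \ {0}) ∩ A = latticeOf K ι x ∩ A := by
    rw [← Set.inter_sdiff_right_comm, Set.sdiff_singleton_eq_self fun h => hA h.2]
  rw [siegel, tsum_subtype, Set.indicator_indicator, hset, ← tsum_subtype, tsum_const,
    Nat.card_coe_set_eq, nsmul_eq_mul, mul_one]

lemma siegel_indicator_one_smul {A : Set (ι → KS K)} (hA : (0 : ι → KS K) ∉ A)
    (g : SLd K ι) (x : XS K ι) :
    siegel K ι (A.indicator fun _ => 1) (g • x) = (latticeOf K ι x ∩ (g • ·) ⁻¹' A).ncard := by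
  rw [siegel_indicator_one hA, latticeOf_smul, ← Set.image_smul,
    ← Set.image_inter_preimage, Set.ncard_image_of_injective _ (MulAction.injective g)]

end Lattices

section Counting

variable {K : Type} [Field K] [NumberField K] {m n : ℕ}
  {a : Fin m → InfinitePlace K → ℝ} {b : Fin n → InfinitePlace K → ℝ}

lemma siegel_gtSL_smul_eq_sum (ha : IsWeight a) (hb : IsWeight b)
    (hdet : ∀ t : ℝ, (gtMat a b t).det = 1) (x : XS K (Fin m ⊕ Fin n)) {c r t T : ℝ}
    (ht : t ∈ Set.Icc 0 T) :
    siegel K (Fin m ⊕ Fin n) ((Eset a b c r).indicator fun _ => 1) (gtSL a b hdet t • x) =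
      ∑ v ∈ (latticeOf_inter_finite x (isBounded_Eset ha hb c (T + r))).toFinset,
        (Set.Ioc (Real.log (wnorm b (ypart v)) - r) (Real.log (wnorm b (ypart v)))).indicator
          (fun _ => 1) t := by
  set V := (latticeOf_inter_finite x (isBounded_Eset ha hb c (T + r))).toFinset
  have hhits : latticeOf K _ x ∩ (gtSL a b hdet t • ·) ⁻¹' Eset a b c r =
      ↑(V.filter fun v =>
        t ∈ Set.Ioc (Real.log (wnorm b (ypart v)) - r) (Real.log (wnorm b (ypart v)))) := by
    ext v
    simp only [Set.mem_inter_iff, Set.mem_preimage, Finset.coe_filter, Set.Finite.mem_toFinset,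
      Set.mem_ofPred_eq, V, and_assoc]
    exact and_congr_right fun _ => gtMat_mulVec_mem_Eset_iff_of_mem_Icc ha.1 hb.1 ht v
  rw [siegel_indicator_one_smul (zero_notMem_Eset hb.1 c r), hhits, Set.ncard_coe_finset,
    Finset.natCast_card_filter]
  simp only [Set.indicator_apply]

lemma integral_siegel_gtSL_smul_eq_sum (ha : IsWeight a) (hb : IsWeight b)
    (hdet : ∀ t : ℝ, (gtMat a b t).det = 1) (x : XS K (Fin m ⊕ Fin n)) {c r T : ℝ} (hT : 0 ≤ T) :
    ∫ t in (0:ℝ)..T,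
        siegel K (Fin m ⊕ Fin n) ((Eset a b c r).indicator fun _ => 1) (gtSL a b hdet t • x) =
      ∑ v ∈ (latticeOf_inter_finite x (isBounded_Eset ha hb c (T + r))).toFinset,
        ∫ t in (0:ℝ)..T, (Set.Ioc (Real.log (wnorm b (ypart v)) - r)
          (Real.log (wnorm b (ypart v)))).indicator (fun _ => 1) t := by
  rw [intervalIntegral.integral_congr fun t ht =>
    siegel_gtSL_smul_eq_sum ha hb hdet x (Set.uIcc_of_le hT ▸ ht)]
  exact intervalIntegral.integral_finsetSum fun v _ =>
    ((integrable_indicator_iff measurableSet_Ioc).mpr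
      (integrableOn_const measure_Ioc_lt_top.ne)).intervalIntegrable

lemma ncard_mul_le_integral_siegel (ha : IsWeight a) (hb : IsWeight b)
    (hdet : ∀ t : ℝ, (gtMat a b t).det = 1) (x : XS K (Fin m ⊕ Fin n)) {c r T : ℝ} (hr : 0 < r)
    (hT : 0 ≤ T) :
    ((latticeOf K _ x ∩ (Eset a b c T \ Eset a b c r)).ncard : ℝ) * r ≤
      ∫ t in (0:ℝ)..T,
        siegel K (Fin m ⊕ Fin n) ((Eset a b c r).indicator fun _ => 1) (gtSL a b hdet t • x) := by
  have hW : (latticeOf K _ x ∩ (Eset a b c T \ Eset a b c r)).Finite :=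
    latticeOf_inter_finite x ((isBounded_Eset ha hb c T).subset Set.sdiff_subset)
  have hWV : latticeOf K _ x ∩ (Eset a b c T \ Eset a b c r) ⊆
      latticeOf K _ x ∩ Eset a b c (T + r) :=
    Set.inter_subset_inter_right _ (Set.sdiff_subset.trans (Eset_mono c (by linarith)))
  rw [integral_siegel_gtSL_smul_eq_sum ha hb hdet x hT, Set.ncard_eq_toFinset_card _ hW,
    ← nsmul_eq_mul, ← Finset.sum_const]
  refine (Finset.sum_le_sum fun v hv => ?_).trans (Finset.sum_le_sum_of_subset_of_nonneg
    (Set.Finite.toFinset_subset_toFinset.mpr hWV)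
    fun v _ _ => intervalIntegral_indicator_Ioc_nonneg hT _ _)
  obtain ⟨-, ⟨hxy, hy1, hyT⟩, hyr⟩ := (Set.Finite.mem_toFinset hW).mp hv
  have hy0 : 0 < wnorm b (ypart v) := by linarith
  refine (intervalIntegral_indicator_Ioc_eq hr.le ?_ ((Real.log_lt_iff_lt_exp hy0).mpr hyT).le).ge
  exact (Real.le_log_iff_exp_le hy0).mpr (not_lt.mp fun h => hyr ⟨hxy, hy1, h⟩)

lemma integral_siegel_le_ncard_mul (ha : IsWeight a) (hb : IsWeight b)
    (hdet : ∀ t : ℝ, (gtMat a b t).det = 1) (x : XS K (Fin m ⊕ Fin n)) {c r T : ℝ} (hr : 0 < r)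
    (hT : 0 ≤ T) :
    ∫ t in (0:ℝ)..T,
        siegel K (Fin m ⊕ Fin n) ((Eset a b c r).indicator fun _ => 1) (gtSL a b hdet t • x) ≤
      ((latticeOf K _ x ∩ Eset a b c (T + r)).ncard : ℝ) * r := by
  rw [integral_siegel_gtSL_smul_eq_sum ha hb hdet x hT, Set.ncard_eq_toFinset_card _
    (latticeOf_inter_finite x (isBounded_Eset ha hb c (T + r))), ← nsmul_eq_mul,
    ← Finset.sum_const]
  exact Finset.sum_le_sum fun v _ => intervalIntegral_indicator_Ioc_le hT hr.le _

end Counting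

theorem sandwich_inequalities_general (K : Type) [Field K] [NumberField K] (m n : ℕ)
    (a : Fin m → InfinitePlace K → ℝ) (b : Fin n → InfinitePlace K → ℝ)
    (ha : IsWeight a) (hb : IsWeight b)
    (hdet : ∀ t : ℝ, (gtMat a b t).det = 1)
    (x : XS K (Fin m ⊕ Fin n)) (c r T : ℝ) (hr : 0 < r) (hrT : r < T) :
    ((Set.ncard (latticeOf K (Fin m ⊕ Fin n) x ∩ (Eset a b c T \ Eset a b c r)) : ℝ) ≤
        (1 / r) * ∫ t in (0:ℝ)..T,
          siegel K (Fin m ⊕ Fin n) (Set.indicator (Eset a b c r) fun _ => (1:ℝ))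
            (gtSL a b hdet t • x)) ∧
    ((1 / r) * (∫ t in (0:ℝ)..T,
          siegel K (Fin m ⊕ Fin n) (Set.indicator (Eset a b c r) fun _ => (1:ℝ))
            (gtSL a b hdet t • x)) ≤
        (Set.ncard (latticeOf K (Fin m ⊕ Fin n) x ∩ Eset a b c (T + r)) : ℝ)) ∧
    ((1 / r) * (∫ t in (0:ℝ)..(T - r),
          siegel K (Fin m ⊕ Fin n) (Set.indicator (Eset a b c r) fun _ => (1:ℝ))
            (gtSL a b hdet t • x)) ≤
        (Set.ncard (Eset a b c T ∩ latticeOf K (Fin m ⊕ Fin n) x) : ℝ)) ∧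
    ((Set.ncard (Eset a b c T ∩ latticeOf K (Fin m ⊕ Fin n) x) : ℝ) ≤
        (1 / r) * (∫ t in (0:ℝ)..T,
          siegel K (Fin m ⊕ Fin n) (Set.indicator (Eset a b c r) fun _ => (1:ℝ))
            (gtSL a b hdet t • x)) +
        (Set.ncard (Eset a b c r ∩ latticeOf K (Fin m ⊕ Fin n) x) : ℝ)) := by
  have hT : 0 ≤ T := (hr.trans hrT).le
  have lower := ncard_mul_le_integral_siegel ha hb hdet x (c := c) hr hT
  have upper := integral_siegel_le_ncard_mul ha hb hdet x (c := c) hr hT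
  have upper' := integral_siegel_le_ncard_mul ha hb hdet x (c := c) hr (sub_nonneg.mpr hrT.le)
  rw [sub_add_cancel, Set.inter_comm] at upper'
  set Λ := latticeOf K (Fin m ⊕ Fin n) x
  have hsplit : ((Eset a b c T ∩ Λ).ncard : ℝ) ≤
      (Λ ∩ (Eset a b c T \ Eset a b c r)).ncard + (Eset a b c r ∩ Λ).ncard := by
    have hfin : (Eset a b c r ∩ Λ).Finite :=
      Set.inter_comm Λ _ ▸ latticeOf_inter_finite x (isBounded_Eset ha hb c r)
    have h := Set.ncard_le_ncard_sdiff_add_ncard (Eset a b c T ∩ Λ) _ hfin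
    rw [show (Eset a b c T ∩ Λ) \ (Eset a b c r ∩ Λ) = Λ ∩ (Eset a b c T \ Eset a b c r) by
      ext; simp only [Set.mem_sdiff, Set.mem_inter_iff]; tauto] at h
    exact_mod_cast h
  simp only [one_div_mul_eq_div, le_div_iff₀ hr, div_le_iff₀ hr]
  exact ⟨lower, upper, upper', by linarith [(le_div_iff₀ hr).mpr lower]⟩

/-- **The sandwich inequalities** relating lattice point counts in `E_{T,c}` to
Birkhoff integrals of the Siegel transform `f̂_{r,c}` of the indicator of `E_{r,c}`. -/
theorem sandwich_inequalities (K : Type) [Field K] [NumberField K] (m n : ℕ) (hm : 0 < m) (hn : 0 < n)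
    (a : Fin m → InfinitePlace K → ℝ) (b : Fin n → InfinitePlace K → ℝ)
    (ha : IsWeight a) (hb : IsWeight b)
    (hdet : ∀ t : ℝ, (gtMat a b t).det = 1)
    (x : XS K (Fin m ⊕ Fin n)) (c r T : ℝ) (hc : 0 < c) (hr : 0 < r) (hrT : r < T) :
    ((Set.ncard (latticeOf K (Fin m ⊕ Fin n) x ∩ (Eset a b c T \ Eset a b c r)) : ℝ) ≤
        (1 / r) * ∫ t in (0:ℝ)..T,
          siegel K (Fin m ⊕ Fin n) (Set.indicator (Eset a b c r) fun _ => (1:ℝ))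
            (gtSL a b hdet t • x)) ∧
    ((1 / r) * (∫ t in (0:ℝ)..T,
          siegel K (Fin m ⊕ Fin n) (Set.indicator (Eset a b c r) fun _ => (1:ℝ))
            (gtSL a b hdet t • x)) ≤
        (Set.ncard (latticeOf K (Fin m ⊕ Fin n) x ∩ Eset a b c (T + r)) : ℝ)) ∧
    ((1 / r) * (∫ t in (0:ℝ)..(T - r),
          siegel K (Fin m ⊕ Fin n) (Set.indicator (Eset a b c r) fun _ => (1:ℝ))
            (gtSL a b hdet t • x)) ≤
        (Set.ncard (Eset a b c T ∩ latticeOf K (Fin m ⊕ Fin n) x) : ℝ)) ∧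
    ((Set.ncard (Eset a b c T ∩ latticeOf K (Fin m ⊕ Fin n) x) : ℝ) ≤
        (1 / r) * (∫ t in (0:ℝ)..T,
          siegel K (Fin m ⊕ Fin n) (Set.indicator (Eset a b c r) fun _ => (1:ℝ))
            (gtSL a b hdet t • x)) +
        (Set.ncard (Eset a b c r ∩ latticeOf K (Fin m ⊕ Fin n) x) : ℝ)) :=
  sandwich_inequalities_general K m n a b ha hb hdet x c r T hr hrT

end Paper
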